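/- arXiv:2404.14765 — 5 statements merged into one kernel-verified Lean document; each statement's English description precedes it below -/
import Mathlib

section
/- Let p be a prime with p ≥ 5, and let S be the additive submonoid of ℕ generated by all primes q ≥ p. Then 3p − 6 does not belong to S. Consequently, the Frobenius number of S is at least 3p − 6. -/
open Real

/-- The additive submonoid of ℕ generated by all primes `q ≥ p`. -/
def Sgen (p : ℕ) : AddSubmonoid ℕ := AddSubmonoid.closure {q : ℕ | q.Prime ∧ p ≤ q}

/-- `a` is an atom of `Sgen p`: nonzero, in `Sgen p`, and not a sum of two nonzero elements. -/
def IsAtomOf (p a : ℕ) : Prop :=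
  a ∈ Sgen p ∧ a ≠ 0 ∧
    ¬ ∃ b c : ℕ, b ∈ Sgen p ∧ c ∈ Sgen p ∧ b ≠ 0 ∧ c ≠ 0 ∧ a = b + c

/-!
For `p ≥ 3` every generator of `Sgen p` is odd, so an element of `Sgen p` below `3p` is `0`,
a single prime `q ≥ p`, or a sum of two such primes, hence even. The number `3p - 6 = 3(p - 2)`
is odd for odd `p`, lies below `3p`, and is a proper multiple of `3`, so it is none of these.
-/

theorem mem_Sgen_cases {p n : ℕ} (hp3 : 3 ≤ p) (hn : n ∈ Sgen p) :
    n = 0 ∨ (n.Prime ∧ p ≤ n) ∨ (Even n ∧ 2 * p ≤ n) ∨ 3 * p ≤ n := by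
  induction hn using AddSubmonoid.closure_induction with
  | mem q hq => exact Or.inr (Or.inl hq)
  | zero => exact Or.inl rfl
  | add a b _ _ iha ihb =>
    have odd_of_prime : ∀ q, q.Prime ∧ p ≤ q → q % 2 = 1 ∧ p ≤ q := fun q ⟨hq, hpq⟩ =>
      ⟨Nat.odd_iff.mp (hq.odd_of_ne_two (by omega)), hpq⟩
    rcases iha with rfl | iha
    · simpa using ihb
    rcases ihb with rfl | ihb
    · simpa using Or.inr iha
    simp only [Nat.even_iff] at iha ihb ⊢
    have ha := iha.imp_left (odd_of_prime a)
    have hb := ihb.imp_left (odd_of_prime b)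
    omega

theorem three_mul_sub_six_notMem_Sgen {p : ℕ} (hp : p.Prime) (hp5 : 5 ≤ p) :
    3 * p - 6 ∉ Sgen p := by
  intro hmem
  have hp_odd : p % 2 = 1 := Nat.odd_iff.mp (hp.odd_of_ne_two (by omega))
  rcases mem_Sgen_cases (by omega) hmem with h | ⟨hprime, -⟩ | ⟨heven, -⟩ | h
  · omega
  · have h3 : 3 ∣ 3 * p - 6 := ⟨p - 2, by omega⟩
    rcases hprime.eq_one_or_self_of_dvd 3 h3 with h | h <;> omega
  · rw [Nat.even_iff] at heven
    omega
  · omega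

theorem stmt2 (p : ℕ) (hp : p.Prime) (hp5 : 5 ≤ p) :
    3 * p - 6 ∉ Sgen p ∧
      ∀ F : ℕ, IsGreatest {m : ℕ | m ∉ Sgen p} F → 3 * p - 6 ≤ F := by
  have hnot := three_mul_sub_six_notMem_Sgen hp hp5
  exact ⟨hnot, fun _ hF => hF.2 hnot⟩
end

section
/- Let p = 19 (the 8th prime) and let S be the additive submonoid of ℕ generated by all primes q ≥ 19. Then the Frobenius number of S equals 63, the number of atoms of S equals 10, and the number of elements of S strictly less than 63 equals 24. -/
open Real

/-- Elements of `Sgen 19` below 64. -/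
def Lmem : List ℕ := [0, 19, 23, 29, 31, 37, 38, 41, 42, 43, 46, 47, 48, 50, 52, 53, 54, 56, 57, 58, 59, 60, 61, 62]

/-- Elements of `Sgen 19` below 83. -/
def Lfull : List ℕ := [0, 19, 23, 29, 31, 37, 38, 41, 42, 43, 46, 47, 48, 50, 52, 53, 54, 56, 57, 58, 59, 60, 61, 62, 64, 65, 66, 67, 68, 69, 70, 71, 72, 73, 74, 75, 76, 77, 78, 79, 80, 81, 82]

/-- Decision procedure for membership in `Sgen 19`. -/
def fS (n : ℕ) : Bool := decide (n ∈ Lmem) || decide (64 ≤ n)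

lemma memS_full : ∀ n ∈ Lfull, n ∈ Sgen 19 := by
  have h0 : (0:ℕ) ∈ Sgen 19 := zero_mem _
  have h19 : (19:ℕ) ∈ Sgen 19 := AddSubmonoid.subset_closure ⟨by norm_num, by norm_num⟩
  have h23 : (23:ℕ) ∈ Sgen 19 := AddSubmonoid.subset_closure ⟨by norm_num, by norm_num⟩
  have h29 : (29:ℕ) ∈ Sgen 19 := AddSubmonoid.subset_closure ⟨by norm_num, by norm_num⟩
  have h31 : (31:ℕ) ∈ Sgen 19 := AddSubmonoid.subset_closure ⟨by norm_num, by norm_num⟩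
  have h37 : (37:ℕ) ∈ Sgen 19 := AddSubmonoid.subset_closure ⟨by norm_num, by norm_num⟩
  have h38 : (38:ℕ) ∈ Sgen 19 := add_mem h19 h19
  have h41 : (41:ℕ) ∈ Sgen 19 := AddSubmonoid.subset_closure ⟨by norm_num, by norm_num⟩
  have h42 : (42:ℕ) ∈ Sgen 19 := add_mem h19 h23
  have h43 : (43:ℕ) ∈ Sgen 19 := AddSubmonoid.subset_closure ⟨by norm_num, by norm_num⟩
  have h46 : (46:ℕ) ∈ Sgen 19 := add_mem h23 h23
  have h47 : (47:ℕ) ∈ Sgen 19 := AddSubmonoid.subset_closure ⟨by norm_num, by norm_num⟩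
  have h48 : (48:ℕ) ∈ Sgen 19 := add_mem h19 h29
  have h50 : (50:ℕ) ∈ Sgen 19 := add_mem h19 h31
  have h52 : (52:ℕ) ∈ Sgen 19 := add_mem h23 h29
  have h53 : (53:ℕ) ∈ Sgen 19 := AddSubmonoid.subset_closure ⟨by norm_num, by norm_num⟩
  have h54 : (54:ℕ) ∈ Sgen 19 := add_mem h23 h31
  have h56 : (56:ℕ) ∈ Sgen 19 := add_mem h19 h37
  have h57 : (57:ℕ) ∈ Sgen 19 := add_mem h19 h38
  have h58 : (58:ℕ) ∈ Sgen 19 := add_mem h29 h29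
  have h59 : (59:ℕ) ∈ Sgen 19 := AddSubmonoid.subset_closure ⟨by norm_num, by norm_num⟩
  have h60 : (60:ℕ) ∈ Sgen 19 := add_mem h19 h41
  have h61 : (61:ℕ) ∈ Sgen 19 := AddSubmonoid.subset_closure ⟨by norm_num, by norm_num⟩
  have h62 : (62:ℕ) ∈ Sgen 19 := add_mem h19 h43
  have h64 : (64:ℕ) ∈ Sgen 19 := add_mem h23 h41
  have h65 : (65:ℕ) ∈ Sgen 19 := add_mem h19 h46
  have h66 : (66:ℕ) ∈ Sgen 19 := add_mem h19 h47
  have h67 : (67:ℕ) ∈ Sgen 19 := AddSubmonoid.subset_closure ⟨by norm_num, by norm_num⟩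
  have h68 : (68:ℕ) ∈ Sgen 19 := add_mem h31 h37
  have h69 : (69:ℕ) ∈ Sgen 19 := add_mem h19 h50
  have h70 : (70:ℕ) ∈ Sgen 19 := add_mem h23 h47
  have h71 : (71:ℕ) ∈ Sgen 19 := AddSubmonoid.subset_closure ⟨by norm_num, by norm_num⟩
  have h72 : (72:ℕ) ∈ Sgen 19 := add_mem h19 h53
  have h73 : (73:ℕ) ∈ Sgen 19 := AddSubmonoid.subset_closure ⟨by norm_num, by norm_num⟩
  have h74 : (74:ℕ) ∈ Sgen 19 := add_mem h31 h43
  have h75 : (75:ℕ) ∈ Sgen 19 := add_mem h19 h56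
  have h76 : (76:ℕ) ∈ Sgen 19 := add_mem h19 h57
  have h77 : (77:ℕ) ∈ Sgen 19 := add_mem h19 h58
  have h78 : (78:ℕ) ∈ Sgen 19 := add_mem h19 h59
  have h79 : (79:ℕ) ∈ Sgen 19 := AddSubmonoid.subset_closure ⟨by norm_num, by norm_num⟩
  have h80 : (80:ℕ) ∈ Sgen 19 := add_mem h19 h61
  have h81 : (81:ℕ) ∈ Sgen 19 := add_mem h19 h62
  have h82 : (82:ℕ) ∈ Sgen 19 := add_mem h23 h59
  intro n hn
  fin_cases hn
  exacts [h0, h19, h23, h29, h31, h37, h38, h41, h42, h43, h46, h47, h48, h50, h52, h53, h54, h56, h57, h58, h59, h60, h61, h62, h64, h65, h66, h67, h68, h69, h70, h71, h72, h73, h74, h75, h76, h77, h78, h79, h80, h81, h82]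

lemma memS_ge64 : ∀ n, 64 ≤ n → n ∈ Sgen 19 := by
  intro n
  induction n using Nat.strong_induction_on with
  | _ n ih =>
    intro h64
    by_cases h83 : 83 ≤ n
    · have h1 : n - 19 ∈ Sgen 19 := ih (n - 19) (by omega) (by omega)
      have h19 : (19:ℕ) ∈ Sgen 19 := AddSubmonoid.subset_closure ⟨by norm_num, by norm_num⟩
      have := add_mem h19 h1
      rwa [show 19 + (n - 19) = n by omega] at this
    · have hlt : n < 83 := by omega
      interval_cases n <;> exact memS_full _ (by decide)

lemma memS_of_f : ∀ n, fS n = true → n ∈ Sgen 19 := by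
  intro n h
  by_cases h64 : 64 ≤ n
  · exact memS_ge64 n h64
  · simp only [fS, Bool.or_eq_true, decide_eq_true_eq] at h
    rcases h with h | h
    · exact memS_full n ((by decide : ∀ m ∈ Lmem, m ∈ Lfull) n h)
    · omega

set_option maxRecDepth 40000 in
/-- The set of `n` with `fS n = true`, as an additive submonoid. -/
def TS : AddSubmonoid ℕ where
  carrier := {n : ℕ | fS n = true}
  zero_mem' := by decide
  add_mem' := by
    intro a b ha hb
    simp only [Set.mem_setOf_eq] at *
    by_cases hab : 64 ≤ a + b
    · simp only [fS, Bool.or_eq_true, decide_eq_true_eq]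
      right; exact hab
    · have ha64 : a < 64 := by omega
      have hb64 : b < 64 := by omega
      exact (by decide : ∀ a < 64, ∀ b < 64, fS a = true → fS b = true →
        fS (a + b) = true) a ha64 b hb64 ha hb

set_option maxRecDepth 40000 in
lemma f_of_memS : ∀ n ∈ Sgen 19, fS n = true := by
  have key : Sgen 19 ≤ TS := by
    rw [Sgen]
    refine AddSubmonoid.closure_le.mpr ?_
    intro q hq
    obtain ⟨hqp, hq19⟩ := hq
    show fS q = true
    by_cases h64 : 64 ≤ q
    · simp only [fS, Bool.or_eq_true, decide_eq_true_eq]; right; exact h64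
    · have hq64 : q < 64 := by omega
      exact (by decide : ∀ q < 64, Nat.Prime q → 19 ≤ q → fS q = true) q hq64 hqp hq19
  exact fun n hn => key hn

/-- Decides whether `a` is decomposable as a sum of two nonzero elements. -/
def gD (a : ℕ) : Bool := decide (∃ b < a, 0 < b ∧ fS b = true ∧ fS (a - b) = true)

lemma not_decomp {a : ℕ} (hg : gD a = false) :
    ¬ ∃ b c : ℕ, b ∈ Sgen 19 ∧ c ∈ Sgen 19 ∧ b ≠ 0 ∧ c ≠ 0 ∧ a = b + c := by
  rintro ⟨b, c, hb, hc, hb0, hc0, rfl⟩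
  have hfb := f_of_memS b hb
  have hfc := f_of_memS c hc
  have : gD (b + c) = true := by
    simp only [gD, decide_eq_true_eq]
    exact ⟨b, by omega, by omega, hfb, by rwa [show b + c - b = c by omega]⟩
  rw [hg] at this
  exact absurd this (by simp)

set_option maxRecDepth 40000 in
lemma atom_iff (a : ℕ) : IsAtomOf 19 a ↔ a ∈ ({19, 23, 29, 31, 37, 41, 43, 47, 53, 59} : Finset ℕ) := by
  constructor
  · rintro ⟨haS, ha0, hnd⟩
    have hf : fS a = true := f_of_memS a haS
    have hlt : a < 83 := by
      by_contra hge
      push_neg at hge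
      exact hnd ⟨19, a - 19,
        AddSubmonoid.subset_closure ⟨by norm_num, by norm_num⟩,
        memS_ge64 (a - 19) (by omega), by omega, by omega, by omega⟩
    have hg : gD a = false := by
      cases hgg : gD a with
      | false => rfl
      | true =>
        exfalso
        simp only [gD, decide_eq_true_eq] at hgg
        obtain ⟨b, hba, hb0, hfb, hfab⟩ := hgg
        exact hnd ⟨b, a - b, memS_of_f b hfb, memS_of_f (a - b) hfab,
          by omega, by omega, by omega⟩
    exact (by decide : ∀ a < 83, a ≠ 0 → fS a = true → gD a = false →
      a ∈ ({19, 23, 29, 31, 37, 41, 43, 47, 53, 59} : Finset ℕ)) a hlt ha0 hf hg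
  · intro ha
    have hf : fS a = true := (by decide : ∀ a ∈ ({19, 23, 29, 31, 37, 41, 43, 47, 53, 59} : Finset ℕ), fS a = true) a ha
    have hg : gD a = false := (by decide : ∀ a ∈ ({19, 23, 29, 31, 37, 41, 43, 47, 53, 59} : Finset ℕ), gD a = false) a ha
    have ha0 : a ≠ 0 := (by decide : ∀ a ∈ ({19, 23, 29, 31, 37, 41, 43, 47, 53, 59} : Finset ℕ), a ≠ 0) a ha
    exact ⟨memS_of_f a hf, ha0, not_decomp hg⟩

set_option maxRecDepth 40000 in
theorem stmt4 :
    IsGreatest {m : ℕ | m ∉ Sgen 19} 63 ∧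
      {a : ℕ | IsAtomOf 19 a}.ncard = 10 ∧
      {m : ℕ | m ∈ Sgen 19 ∧ m < 63}.ncard = 24 := by
  refine ⟨⟨?_, ?_⟩, ?_, ?_⟩
  · intro h
    have := f_of_memS 63 h
    exact absurd this (by decide)
  · intro m hm
    by_contra hgt
    push_neg at hgt
    exact hm (memS_ge64 m (by omega))
  · have hset : {a : ℕ | IsAtomOf 19 a} = ↑({19, 23, 29, 31, 37, 41, 43, 47, 53, 59} : Finset ℕ) := by
      ext a
      simp only [Set.mem_setOf_eq, Finset.coe_insert, Set.mem_insert_iff,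
        Finset.coe_singleton, Set.mem_singleton_iff]
      rw [atom_iff]
      simp
    rw [hset, Set.ncard_coe_finset]
    decide
  · have hset : {m : ℕ | m ∈ Sgen 19 ∧ m < 63} = ↑(Lmem.toFinset) := by
      ext m
      simp only [Set.mem_setOf_eq, List.coe_toFinset, Set.mem_setOf_eq]
      constructor
      · rintro ⟨hmS, hm63⟩
        have hf := f_of_memS m hmS
        exact (by decide : ∀ m < 63, fS m = true → m ∈ Lmem) m hm63 hf
      · intro hm
        refine ⟨memS_of_f m ?_, ?_⟩
        · simp only [fS, Bool.or_eq_true, decide_eq_true_eq]; left; exact hm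
        · exact (by decide : ∀ m ∈ Lmem, m < 63) m hm
    rw [hset, Set.ncard_coe_finset]
    decide
end

section
/- Let p = 47 (the 15th prime) and let S be the additive submonoid of ℕ generated by all primes q ≥ 47. Then the largest atom of S equals 163, so the ratio of the largest atom to p equals 163/47. -/
open Real

lemma hp : ∀ q : ℕ, q.Prime → 47 ≤ q → q ∈ Sgen 47 :=
  fun _ a b => AddSubmonoid.subset_closure ⟨a, b⟩

lemma Sgen_lower : ∀ a ∈ Sgen 47, a = 0 ∨ 47 ≤ a := by
  intro a ha
  induction ha using AddSubmonoid.closure_induction with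
  | mem x h => exact Or.inr h.2
  | zero => exact Or.inl rfl
  | add x y hx hy ihx ihy => omega

lemma Sgen_classify : ∀ a ∈ Sgen 47, a = 0 ∨ (a.Prime ∧ 47 ≤ a) ∨
    ∃ b c : ℕ, b ∈ Sgen 47 ∧ c ∈ Sgen 47 ∧ b ≠ 0 ∧ c ≠ 0 ∧ a = b + c := by
  intro a ha
  induction ha using AddSubmonoid.closure_induction with
  | mem x h => exact Or.inr (Or.inl h)
  | zero => exact Or.inl rfl
  | add x y hx hy ihx ihy =>
    rcases eq_or_ne x 0 with rfl | hx0
    · simpa using ihy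
    rcases eq_or_ne y 0 with rfl | hy0
    · simpa using ihx
    exact Or.inr (Or.inr ⟨x, y, hx, hy, hx0, hy0, rfl⟩)

lemma memS_base : ∀ n : ℕ, 146 ≤ n → n ≤ 192 → n ∈ Sgen 47 := by
  intro n h1 h2
  interval_cases n
  · rw [show (146:ℕ) = 67 + (79) by norm_num]
    exact (add_mem (hp 67 (by norm_num) (by norm_num)) (hp 79 (by norm_num) (by norm_num)))
  · rw [show (147:ℕ) = 47 + (47 + (53)) by norm_num]
    exact (add_mem (hp 47 (by norm_num) (by norm_num)) (add_mem (hp 47 (by norm_num) (by norm_num)) (hp 53 (by norm_num) (by norm_num))))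
  · rw [show (148:ℕ) = 47 + (101) by norm_num]
    exact (add_mem (hp 47 (by norm_num) (by norm_num)) (hp 101 (by norm_num) (by norm_num)))
  · exact hp 149 (by norm_num) (by norm_num)
  · rw [show (150:ℕ) = 47 + (103) by norm_num]
    exact (add_mem (hp 47 (by norm_num) (by norm_num)) (hp 103 (by norm_num) (by norm_num)))
  · exact hp 151 (by norm_num) (by norm_num)
  · rw [show (152:ℕ) = 73 + (79) by norm_num]
    exact (add_mem (hp 73 (by norm_num) (by norm_num)) (hp 79 (by norm_num) (by norm_num)))
  · rw [show (153:ℕ) = 47 + (47 + (59)) by norm_num]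
    exact (add_mem (hp 47 (by norm_num) (by norm_num)) (add_mem (hp 47 (by norm_num) (by norm_num)) (hp 59 (by norm_num) (by norm_num))))
  · rw [show (154:ℕ) = 47 + (107) by norm_num]
    exact (add_mem (hp 47 (by norm_num) (by norm_num)) (hp 107 (by norm_num) (by norm_num)))
  · rw [show (155:ℕ) = 47 + (47 + (61)) by norm_num]
    exact (add_mem (hp 47 (by norm_num) (by norm_num)) (add_mem (hp 47 (by norm_num) (by norm_num)) (hp 61 (by norm_num) (by norm_num))))
  · rw [show (156:ℕ) = 47 + (109) by norm_num]
    exact (add_mem (hp 47 (by norm_num) (by norm_num)) (hp 109 (by norm_num) (by norm_num)))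
  · exact hp 157 (by norm_num) (by norm_num)
  · rw [show (158:ℕ) = 61 + (97) by norm_num]
    exact (add_mem (hp 61 (by norm_num) (by norm_num)) (hp 97 (by norm_num) (by norm_num)))
  · rw [show (159:ℕ) = 47 + (53 + (59)) by norm_num]
    exact (add_mem (hp 47 (by norm_num) (by norm_num)) (add_mem (hp 53 (by norm_num) (by norm_num)) (hp 59 (by norm_num) (by norm_num))))
  · rw [show (160:ℕ) = 47 + (113) by norm_num]
    exact (add_mem (hp 47 (by norm_num) (by norm_num)) (hp 113 (by norm_num) (by norm_num)))
  · rw [show (161:ℕ) = 47 + (47 + (67)) by norm_num]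
    exact (add_mem (hp 47 (by norm_num) (by norm_num)) (add_mem (hp 47 (by norm_num) (by norm_num)) (hp 67 (by norm_num) (by norm_num))))
  · rw [show (162:ℕ) = 53 + (109) by norm_num]
    exact (add_mem (hp 53 (by norm_num) (by norm_num)) (hp 109 (by norm_num) (by norm_num)))
  · exact hp 163 (by norm_num) (by norm_num)
  · rw [show (164:ℕ) = 61 + (103) by norm_num]
    exact (add_mem (hp 61 (by norm_num) (by norm_num)) (hp 103 (by norm_num) (by norm_num)))
  · rw [show (165:ℕ) = 47 + (47 + (71)) by norm_num]
    exact (add_mem (hp 47 (by norm_num) (by norm_num)) (add_mem (hp 47 (by norm_num) (by norm_num)) (hp 71 (by norm_num) (by norm_num))))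
  · rw [show (166:ℕ) = 53 + (113) by norm_num]
    exact (add_mem (hp 53 (by norm_num) (by norm_num)) (hp 113 (by norm_num) (by norm_num)))
  · rw [show (167:ℕ) = 47 + (47 + (73)) by norm_num]
    exact (add_mem (hp 47 (by norm_num) (by norm_num)) (add_mem (hp 47 (by norm_num) (by norm_num)) (hp 73 (by norm_num) (by norm_num))))
  · rw [show (168:ℕ) = 59 + (109) by norm_num]
    exact (add_mem (hp 59 (by norm_num) (by norm_num)) (hp 109 (by norm_num) (by norm_num)))
  · rw [show (169:ℕ) = 47 + (61 + (61)) by norm_num]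
    exact (add_mem (hp 47 (by norm_num) (by norm_num)) (add_mem (hp 61 (by norm_num) (by norm_num)) (hp 61 (by norm_num) (by norm_num))))
  · rw [show (170:ℕ) = 61 + (109) by norm_num]
    exact (add_mem (hp 61 (by norm_num) (by norm_num)) (hp 109 (by norm_num) (by norm_num)))
  · rw [show (171:ℕ) = 47 + (53 + (71)) by norm_num]
    exact (add_mem (hp 47 (by norm_num) (by norm_num)) (add_mem (hp 53 (by norm_num) (by norm_num)) (hp 71 (by norm_num) (by norm_num))))
  · rw [show (172:ℕ) = 59 + (113) by norm_num]
    exact (add_mem (hp 59 (by norm_num) (by norm_num)) (hp 113 (by norm_num) (by norm_num)))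
  · rw [show (173:ℕ) = 47 + (47 + (79)) by norm_num]
    exact (add_mem (hp 47 (by norm_num) (by norm_num)) (add_mem (hp 47 (by norm_num) (by norm_num)) (hp 79 (by norm_num) (by norm_num))))
  · rw [show (174:ℕ) = 47 + (127) by norm_num]
    exact (add_mem (hp 47 (by norm_num) (by norm_num)) (hp 127 (by norm_num) (by norm_num)))
  · rw [show (175:ℕ) = 47 + (61 + (67)) by norm_num]
    exact (add_mem (hp 47 (by norm_num) (by norm_num)) (add_mem (hp 61 (by norm_num) (by norm_num)) (hp 67 (by norm_num) (by norm_num))))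
  · rw [show (176:ℕ) = 67 + (109) by norm_num]
    exact (add_mem (hp 67 (by norm_num) (by norm_num)) (hp 109 (by norm_num) (by norm_num)))
  · rw [show (177:ℕ) = 47 + (47 + (83)) by norm_num]
    exact (add_mem (hp 47 (by norm_num) (by norm_num)) (add_mem (hp 47 (by norm_num) (by norm_num)) (hp 83 (by norm_num) (by norm_num))))
  · rw [show (178:ℕ) = 47 + (131) by norm_num]
    exact (add_mem (hp 47 (by norm_num) (by norm_num)) (hp 131 (by norm_num) (by norm_num)))
  · rw [show (179:ℕ) = 47 + (53 + (79)) by norm_num]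
    exact (add_mem (hp 47 (by norm_num) (by norm_num)) (add_mem (hp 53 (by norm_num) (by norm_num)) (hp 79 (by norm_num) (by norm_num))))
  · rw [show (180:ℕ) = 53 + (127) by norm_num]
    exact (add_mem (hp 53 (by norm_num) (by norm_num)) (hp 127 (by norm_num) (by norm_num)))
  · rw [show (181:ℕ) = 47 + (61 + (73)) by norm_num]
    exact (add_mem (hp 47 (by norm_num) (by norm_num)) (add_mem (hp 61 (by norm_num) (by norm_num)) (hp 73 (by norm_num) (by norm_num))))
  · rw [show (182:ℕ) = 73 + (109) by norm_num]
    exact (add_mem (hp 73 (by norm_num) (by norm_num)) (hp 109 (by norm_num) (by norm_num)))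
  · rw [show (183:ℕ) = 47 + (47 + (89)) by norm_num]
    exact (add_mem (hp 47 (by norm_num) (by norm_num)) (add_mem (hp 47 (by norm_num) (by norm_num)) (hp 89 (by norm_num) (by norm_num))))
  · rw [show (184:ℕ) = 47 + (137) by norm_num]
    exact (add_mem (hp 47 (by norm_num) (by norm_num)) (hp 137 (by norm_num) (by norm_num)))
  · rw [show (185:ℕ) = 47 + (59 + (79)) by norm_num]
    exact (add_mem (hp 47 (by norm_num) (by norm_num)) (add_mem (hp 59 (by norm_num) (by norm_num)) (hp 79 (by norm_num) (by norm_num))))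
  · rw [show (186:ℕ) = 47 + (139) by norm_num]
    exact (add_mem (hp 47 (by norm_num) (by norm_num)) (hp 139 (by norm_num) (by norm_num)))
  · rw [show (187:ℕ) = 47 + (61 + (79)) by norm_num]
    exact (add_mem (hp 47 (by norm_num) (by norm_num)) (add_mem (hp 61 (by norm_num) (by norm_num)) (hp 79 (by norm_num) (by norm_num))))
  · rw [show (188:ℕ) = 47 + (47 + (47 + (47))) by norm_num]
    exact (add_mem (hp 47 (by norm_num) (by norm_num)) (add_mem (hp 47 (by norm_num) (by norm_num)) (add_mem (hp 47 (by norm_num) (by norm_num)) (hp 47 (by norm_num) (by norm_num)))))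
  · rw [show (189:ℕ) = 47 + (53 + (89)) by norm_num]
    exact (add_mem (hp 47 (by norm_num) (by norm_num)) (add_mem (hp 53 (by norm_num) (by norm_num)) (hp 89 (by norm_num) (by norm_num))))
  · rw [show (190:ℕ) = 53 + (137) by norm_num]
    exact (add_mem (hp 53 (by norm_num) (by norm_num)) (hp 137 (by norm_num) (by norm_num)))
  · rw [show (191:ℕ) = 47 + (47 + (97)) by norm_num]
    exact (add_mem (hp 47 (by norm_num) (by norm_num)) (add_mem (hp 47 (by norm_num) (by norm_num)) (hp 97 (by norm_num) (by norm_num))))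
  · rw [show (192:ℕ) = 53 + (139) by norm_num]
    exact (add_mem (hp 53 (by norm_num) (by norm_num)) (hp 139 (by norm_num) (by norm_num)))

lemma memS : ∀ n : ℕ, 146 ≤ n → n ∈ Sgen 47 := by
  intro n
  induction n using Nat.strong_induction_on with
  | _ n ih =>
    intro h
    by_cases h2 : n ≤ 192
    · exact memS_base n h h2
    · have hm := ih (n - 47) (by omega) (by omega)
      have h47 : (47 : ℕ) ∈ Sgen 47 := hp 47 (by norm_num) (by norm_num)
      have he : 47 + (n - 47) = n := by omega
      rw [← he]
      exact add_mem h47 hm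

lemma mem5 : ∀ q : ℕ, q.Prime → 47 ≤ q → q ≤ 69 →
    q = 47 ∨ q = 53 ∨ q = 59 ∨ q = 61 ∨ q = 67 := by
  intro q hq h1 h2
  interval_cases q <;> first | omega | exact absurd hq (by norm_num)

lemma no_three : ∀ x y z : ℕ, x.Prime → y.Prime → z.Prime →
    47 ≤ x → 47 ≤ y → 47 ≤ z → x + y + z ≠ 163 := by
  intro x y z hx hy hz h1 h2 h3 hsum
  have e1 := mem5 x hx h1 (by omega)
  have e2 := mem5 y hy h2 (by omega)
  have e3 := mem5 z hz h3 (by omega)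
  rcases e1 with rfl|rfl|rfl|rfl|rfl <;> rcases e2 with rfl|rfl|rfl|rfl|rfl <;> omega

lemma odd_of_prime_ge : ∀ q : ℕ, q.Prime → 47 ≤ q → q % 2 = 1 := by
  intro q hq h
  rcases hq.eq_two_or_odd with h2 | h1
  · omega
  · exact h1

/-- a nonzero element of S that is either prime-or-decomposable; refined: if it is
nonzero and not further decomposable then it is prime. -/
lemma prime_or_big : ∀ a ∈ Sgen 47, a ≠ 0 → (a.Prime ∧ 47 ≤ a) ∨ 94 ≤ a := by
  intro a ha h0
  rcases Sgen_classify a ha with rfl | hpr | ⟨b, c, hb, hc, hb0, hc0, rfl⟩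
  · exact absurd rfl h0
  · exact Or.inl hpr
  · rcases Sgen_lower b hb with rfl | h1; · exact absurd rfl hb0
    rcases Sgen_lower c hc with rfl | h2; · exact absurd rfl hc0
    exact Or.inr (by omega)

lemma atom163 : IsAtomOf 47 163 := by
  refine ⟨hp 163 (by norm_num) (by norm_num), by norm_num, ?_⟩
  rintro ⟨b, c, hb, hc, hb0, hc0, hbc⟩
  rcases prime_or_big b hb hb0 with ⟨hbp, hbl⟩ | hbig
  · rcases prime_or_big c hc hc0 with ⟨hcp, hcl⟩ | hbig2
    · -- both prime: parity
      have o1 := odd_of_prime_ge b hbp hbl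
      have o2 := odd_of_prime_ge c hcp hcl
      omega
    · -- c decomposes: c = c1 + c2, both prime (else total ≥ 188)
      rcases Sgen_classify c hc with rfl | ⟨hcp, hcl⟩ | ⟨c1, c2, h1, h2, h10, h20, rfl⟩
      · exact absurd rfl hc0
      · have o1 := odd_of_prime_ge b hbp hbl
        have o2 := odd_of_prime_ge c hcp hcl
        omega
      · rcases prime_or_big c1 h1 h10 with ⟨p1, l1⟩ | big1
        · rcases prime_or_big c2 h2 h20 with ⟨p2, l2⟩ | big2
          · exact no_three b c1 c2 hbp p1 p2 hbl l1 l2 (by omega)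
          · rcases Sgen_lower c1 h1 with rfl | l1; · exact absurd rfl h10
            omega
        · rcases Sgen_lower c2 h2 with rfl | l2; · exact absurd rfl h20
          omega
  · rcases prime_or_big c hc hc0 with ⟨hcp, hcl⟩ | hbig2
    · -- b decomposes, c prime
      rcases Sgen_classify b hb with rfl | ⟨hbp, hbl⟩ | ⟨b1, b2, h1, h2, h10, h20, rfl⟩
      · exact absurd rfl hb0
      · have o1 := odd_of_prime_ge b hbp hbl
        have o2 := odd_of_prime_ge c hcp hcl
        omega
      · rcases prime_or_big b1 h1 h10 with ⟨p1, l1⟩ | big1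
        · rcases prime_or_big b2 h2 h20 with ⟨p2, l2⟩ | big2
          · exact no_three b1 b2 c p1 p2 hcp l1 l2 hcl (by omega)
          · rcases Sgen_lower b1 h1 with rfl | l1; · exact absurd rfl h10
            omega
        · rcases Sgen_lower b2 h2 with rfl | l2; · exact absurd rfl h20
          omega
    · rcases Sgen_lower b hb with rfl | l1; · exact absurd rfl hb0
      rcases Sgen_lower c hc with rfl | l2; · exact absurd rfl hc0
      omega

lemma atom_le : ∀ a : ℕ, IsAtomOf 47 a → a ≤ 163 := by
  intro a ⟨haS, ha0, hnd⟩
  by_contra hgt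
  push_neg at hgt
  have hpr : a.Prime := by
    rcases Sgen_classify a haS with rfl | hpr | ⟨b, c, hb, hc, hb0, hc0, rfl⟩
    · exact absurd rfl ha0
    · exact hpr.1
    · exact absurd ⟨b, c, hb, hc, hb0, hc0, rfl⟩ hnd
  by_cases hsmall : a ≤ 192
  · have h164 : 164 ≤ a := hgt
    interval_cases a
    · exact absurd hpr (by norm_num)
    · exact absurd hpr (by norm_num)
    · exact absurd hpr (by norm_num)
    · exact hnd ⟨47, 120, hp 47 (by norm_num) (by norm_num), by
        rw [show (120:ℕ) = 47 + (73) by norm_num]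
        exact (add_mem (hp 47 (by norm_num) (by norm_num)) (hp 73 (by norm_num) (by norm_num))), by norm_num, by norm_num, by norm_num⟩
    · exact absurd hpr (by norm_num)
    · exact absurd hpr (by norm_num)
    · exact absurd hpr (by norm_num)
    · exact absurd hpr (by norm_num)
    · exact absurd hpr (by norm_num)
    · exact hnd ⟨47, 126, hp 47 (by norm_num) (by norm_num), by
        rw [show (126:ℕ) = 47 + (79) by norm_num]
        exact (add_mem (hp 47 (by norm_num) (by norm_num)) (hp 79 (by norm_num) (by norm_num))), by norm_num, by norm_num, by norm_num⟩
    · exact absurd hpr (by norm_num)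
    · exact absurd hpr (by norm_num)
    · exact absurd hpr (by norm_num)
    · exact absurd hpr (by norm_num)
    · exact absurd hpr (by norm_num)
    · exact hnd ⟨47, 132, hp 47 (by norm_num) (by norm_num), by
        rw [show (132:ℕ) = 53 + (79) by norm_num]
        exact (add_mem (hp 53 (by norm_num) (by norm_num)) (hp 79 (by norm_num) (by norm_num))), by norm_num, by norm_num, by norm_num⟩
    · exact absurd hpr (by norm_num)
    · exact hnd ⟨47, 134, hp 47 (by norm_num) (by norm_num), by
        rw [show (134:ℕ) = 61 + (73) by norm_num]
        exact (add_mem (hp 61 (by norm_num) (by norm_num)) (hp 73 (by norm_num) (by norm_num))), by norm_num, by norm_num, by norm_num⟩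
    · exact absurd hpr (by norm_num)
    · exact absurd hpr (by norm_num)
    · exact absurd hpr (by norm_num)
    · exact absurd hpr (by norm_num)
    · exact absurd hpr (by norm_num)
    · exact absurd hpr (by norm_num)
    · exact absurd hpr (by norm_num)
    · exact absurd hpr (by norm_num)
    · exact absurd hpr (by norm_num)
    · exact hnd ⟨47, 144, hp 47 (by norm_num) (by norm_num), by
        rw [show (144:ℕ) = 47 + (97) by norm_num]
        exact (add_mem (hp 47 (by norm_num) (by norm_num)) (hp 97 (by norm_num) (by norm_num))), by norm_num, by norm_num, by norm_num⟩
    · exact absurd hpr (by norm_num)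
  · -- a ≥ 193 : a = 47 + (a - 47), a - 47 ≥ 146
    have hm : a - 47 ∈ Sgen 47 := memS (a - 47) (by omega)
    exact hnd ⟨47, a - 47, hp 47 (by norm_num) (by norm_num), hm, by norm_num,
      by omega, by omega⟩

theorem stmt5 :
    IsGreatest {a : ℕ | IsAtomOf 47 a} 163 ∧ (163 : ℚ) / 47 = 163 / 47 := by
  exact ⟨⟨atom163, fun a ha => atom_le a ha⟩, rfl⟩
end

section
/- Suppose that for every real x ≥ 2010759.9 the open interval (x, x(1 + 1/16597)) contains a prime number. Then for every prime p ≥ 670294, there exists a prime q with 3p(1 − 1/16598) < q < 3p; consequently, if S is the additive submonoid of ℕ generated by all primes ≥ p and u is its largest atom, then u/p > 3 − 3/16598. -/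
open Real

/-! Since `(1 - 1/16598) * (1 + 1/16597) = 1`, Schoenfeld's interval starting at
`x = 3p(1 - 1/16598)` ends exactly at `3p`, giving a prime `q ∈ (3p(1 - 1/16598), 3p)`.
For odd `p`, a prime `q < 3p` is an atom of `Sgen p`: a decomposition `q = b + c` into nonzero
elements forces `b, c < 2p`, hence `b, c` are single (odd) generators and `q` would be even.
So the largest atom is at least `q`. -/

theorem exists_prime_mem_Ioo_three_mul
    (hSchoenfeld : ∀ x : ℝ, 2010759.9 ≤ x →
      ∃ q : ℕ, q.Prime ∧ x < q ∧ (q : ℝ) < x * (1 + 1 / 16597))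
    {y : ℝ} (hy : 670294 ≤ y) :
    ∃ q : ℕ, q.Prime ∧ 3 * y * (1 - 1 / 16598) < q ∧ (q : ℝ) < 3 * y := by
  obtain ⟨q, hq, hxq, hqx⟩ := hSchoenfeld (3 * y * (1 - 1 / 16598)) (by linarith)
  exact ⟨q, hq, hxq, by linarith⟩

namespace Sgen

variable {p n : ℕ}

theorem le_of_mem (hn : n ∈ Sgen p) (hn0 : n ≠ 0) : p ≤ n := by
  induction hn using AddSubmonoid.closure_induction with
  | mem x hx => exact hx.2
  | zero => exact absurd rfl hn0
  | add a b _ _ ha hb =>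
    rcases Nat.eq_zero_or_pos a with rfl | ha0
    · simpa using hb (by simpa using hn0)
    · exact (ha ha0.ne').trans (Nat.le_add_right a b)

theorem odd_of_mem_of_lt (hp : 2 < p) (hn : n ∈ Sgen p) (hn0 : n ≠ 0) (hn2 : n < 2 * p) :
    Odd n := by
  induction hn using AddSubmonoid.closure_induction with
  | mem x hx => exact hx.1.odd_of_ne_two (by have := hx.2; omega)
  | zero => exact absurd rfl hn0
  | add a b ha hb iha ihb =>
    by_cases ha0 : a = 0
    · subst ha0; simpa using ihb (by simpa using hn0) (by simpa using hn2)
    by_cases hb0 : b = 0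
    · subst hb0; simpa using iha ha0 (by simpa using hn2)
    have := le_of_mem ha ha0
    have := le_of_mem hb hb0
    omega

end Sgen

theorem isAtomOf_of_prime_lt_three_mul {p q : ℕ} (hp : 2 < p) (hq : q.Prime) (hpq : p ≤ q)
    (hq3 : q < 3 * p) : IsAtomOf p q := by
  refine ⟨AddSubmonoid.subset_closure ⟨hq, hpq⟩, hq.ne_zero, ?_⟩
  rintro ⟨b, c, hb, hc, hb0, hc0, rfl⟩
  have hpb := Sgen.le_of_mem hb hb0
  have hpc := Sgen.le_of_mem hc hc0
  have hbc : Even (b + c) :=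
    (Sgen.odd_of_mem_of_lt hp hb hb0 (by omega)).add_odd
      (Sgen.odd_of_mem_of_lt hp hc hc0 (by omega))
  have := hq.even_iff.mp hbc
  omega

theorem stmt10
    (hSchoenfeld : ∀ x : ℝ, 2010759.9 ≤ x →
      ∃ q : ℕ, q.Prime ∧ x < q ∧ (q : ℝ) < x * (1 + 1 / 16597)) :
    ∀ p : ℕ, p.Prime → 670294 ≤ p →
      (∃ q : ℕ, q.Prime ∧ 3 * (p : ℝ) * (1 - 1 / 16598) < q ∧ (q : ℝ) < 3 * p) ∧
      ∀ u : ℕ, IsGreatest {a : ℕ | IsAtomOf p a} u →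
        (u : ℝ) / p > 3 - 3 / 16598 := by
  intro p _ hp
  have hpR : (670294 : ℝ) ≤ p := by exact_mod_cast hp
  obtain ⟨q, hq, hlo, hhi⟩ := exists_prime_mem_Ioo_three_mul hSchoenfeld hpR
  refine ⟨⟨q, hq, hlo, hhi⟩, fun u hu => ?_⟩
  have hpq : p ≤ q := by exact_mod_cast (show (p : ℝ) ≤ q by linarith)
  have hq3 : q < 3 * p := by exact_mod_cast hhi
  have hqu : (q : ℝ) ≤ u := by
    exact_mod_cast hu.2 (isAtomOf_of_prime_lt_three_mul (by omega) hq hpq hq3)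
  rw [gt_iff_lt, lt_div_iff₀ (by positivity)]
  linarith
end

section
/- Suppose hypothesis H(7,6) holds: every odd integer N ≥ 7 can be written as N = q₁ + q₂ + q₃ with q₁, q₂, q₃ prime and |N/3 − qᵢ| ≤ N/6 for i = 1,2,3. Then for every prime p, the largest atom u of the additive submonoid of ℕ generated by all primes ≥ p satisfies u < 6p. -/
/-!
An atom `u ≥ 6p` of `S(p)` is an odd prime `≥ 7`, so `H(7,6)` writes it as `q₁ + q₂ + q₃` with
primes `qᵢ ≥ u/6 ≥ p`. These lie in `S(p)`, and `u = q₁ + (q₂ + q₃)` is not an atom.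
-/

open Real

def HypothesisH76 : Prop :=
  ∀ N : ℕ, Odd N → 7 ≤ N →
    ∃ q₁ q₂ q₃ : ℕ, q₁.Prime ∧ q₂.Prime ∧ q₃.Prime ∧ N = q₁ + q₂ + q₃ ∧
      |(N : ℚ) / 3 - q₁| ≤ (N : ℚ) / 6 ∧ |(N : ℚ) / 3 - q₂| ≤ (N : ℚ) / 6 ∧
      |(N : ℚ) / 3 - q₃| ≤ (N : ℚ) / 6

lemma prime_mem_Sgen {p q : ℕ} (hq : q.Prime) (hpq : p ≤ q) : q ∈ Sgen p :=
  AddSubmonoid.subset_closure ⟨hq, hpq⟩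

lemma mem_Sgen_cases_s11 {p a : ℕ} (ha : a ∈ Sgen p) :
    a = 0 ∨ (a.Prime ∧ p ≤ a) ∨
      ∃ b c : ℕ, b ∈ Sgen p ∧ c ∈ Sgen p ∧ b ≠ 0 ∧ c ≠ 0 ∧ a = b + c := by
  induction ha using AddSubmonoid.closure_induction with
  | mem x hx => exact Or.inr (Or.inl hx)
  | zero => exact Or.inl rfl
  | add x y hx hy ihx ihy =>
    rcases eq_or_ne x 0 with rfl | hx0
    · simpa using ihy
    rcases eq_or_ne y 0 with rfl | hy0
    · simpa using ihx
    exact Or.inr (Or.inr ⟨x, y, hx, hy, hx0, hy0, rfl⟩)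

lemma IsAtomOf.prime {p a : ℕ} (h : IsAtomOf p a) : a.Prime ∧ p ≤ a := by
  obtain ⟨ha, ha0, hnd⟩ := h
  rcases mem_Sgen_cases_s11 ha with rfl | h | h
  · exact absurd rfl ha0
  · exact h
  · exact absurd h hnd

lemma HypothesisH76.exists_primes_six_mul_ge (H : HypothesisH76) {N : ℕ} (hN : Odd N)
    (h7 : 7 ≤ N) :
    ∃ q₁ q₂ q₃ : ℕ, q₁.Prime ∧ q₂.Prime ∧ q₃.Prime ∧ N = q₁ + q₂ + q₃ ∧
      N ≤ 6 * q₁ ∧ N ≤ 6 * q₂ ∧ N ≤ 6 * q₃ := by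
  obtain ⟨q₁, q₂, q₃, hq₁, hq₂, hq₃, hsum, h₁, h₂, h₃⟩ := H N hN h7
  have six_mul_ge {q : ℕ} (hq : |(N : ℚ) / 3 - q| ≤ (N : ℚ) / 6) : N ≤ 6 * q := by
    have := (abs_le.mp hq).2
    exact_mod_cast (by linarith : (N : ℚ) ≤ 6 * q)
  exact ⟨q₁, q₂, q₃, hq₁, hq₂, hq₃, hsum, six_mul_ge h₁, six_mul_ge h₂, six_mul_ge h₃⟩

theorem IsAtomOf.lt_six_mul (H : HypothesisH76) {p u : ℕ} (hp : 0 < p) (hu : IsAtomOf p u) :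
    u < 6 * p := by
  by_contra! hle
  have hu_odd : Odd u := hu.prime.1.odd_of_ne_two (by omega)
  have h7 : 7 ≤ u := by obtain ⟨k, rfl⟩ := hu_odd; omega
  obtain ⟨q₁, q₂, q₃, hq₁, hq₂, hq₃, hsum, h₁, h₂, h₃⟩ := H.exists_primes_six_mul_ge hu_odd h7
  have m₁ := prime_mem_Sgen (p := p) hq₁ (by omega)
  have m₂₃ := add_mem (prime_mem_Sgen (p := p) hq₂ (by omega)) (prime_mem_Sgen hq₃ (by omega))
  exact hu.2.2 ⟨q₁, q₂ + q₃, m₁, m₂₃, hq₁.ne_zero, by have := hq₂.pos; omega, by omega⟩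

theorem stmt11
    (H76 : ∀ N : ℕ, Odd N → 7 ≤ N →
      ∃ q₁ q₂ q₃ : ℕ, q₁.Prime ∧ q₂.Prime ∧ q₃.Prime ∧ N = q₁ + q₂ + q₃ ∧
        |(N : ℚ) / 3 - q₁| ≤ (N : ℚ) / 6 ∧ |(N : ℚ) / 3 - q₂| ≤ (N : ℚ) / 6 ∧
        |(N : ℚ) / 3 - q₃| ≤ (N : ℚ) / 6) :
    ∀ p : ℕ, p.Prime → ∀ u : ℕ, IsGreatest {a : ℕ | IsAtomOf p a} u →
      u < 6 * p :=
  fun _ hp _ hu => IsAtomOf.lt_six_mul H76 hp.pos hu.1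
end
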